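/- For all n ≥ 2 and all x ∈ ℂ, the Hankel determinants of the sequence μ_k satisfy the shift identity (-1)^{n-1} · det[μ_{ℓ+j}(x)]_{ℓ,j=1}^{n-1} = det[μ_{ℓ+j-2}(x)]_{ℓ,j=1}^{n}. -/

import Mathlib

open Complex

/-- `μ_k(x)`: the `k`-th Taylor coefficient in `t` of `exp(-t³/3 + t·x)`. -/
noncomputable def mu (k : ℕ) (x : ℂ) : ℂ :=
  iteratedDeriv k (fun t : ℂ => Complex.exp (-t ^ 3 / 3 + t * x)) 0 / (Nat.factorial k)

/-!
For a power series `f`, let `K` be the upper triangular Toeplitz matrix `[f_{j-i}]` of size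
`2n - 1` with its rows reversed. Its principal submatrix on the indices `n - 1, …, 2n - 2` is the
Hankel matrix `[f_{ℓ+j}]`. If `f g = 1`, then `K⁻¹` is the Toeplitz matrix of `g` with its columns
reversed, and its complementary principal submatrix (indices `0, …, n - 2`) is `[g_{ℓ+j+2}]` up to
reversing both its rows and its columns. Jacobi's complementary minor identity
`det A₁₁ = det A · det (A⁻¹)₂₂` thus relates the two Hankel determinants, with the sign
`(-1)^{n-1}` of the reversal of `2n - 1` indices. For `f = ∑ μ_k t^k = exp(-t³/3 + t x)` one has
`f(t) f(-t) = 1`, so `g_k = (-1)^k μ_k`, and these signs cancel in the determinant.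
-/

open PowerSeries Finset
open scoped Nat ContDiff

theorem Fin.sign_revPerm (n : ℕ) :
    Equiv.Perm.sign (Fin.revPerm : Equiv.Perm (Fin n)) = (-1) ^ n.choose 2 := by
  induction n with
  | zero => rfl
  | succ m ih =>
    have hdecomp : (Fin.revPerm : Equiv.Perm (Fin (m + 1)))
        = Equiv.Perm.decomposeFin.symm (0, Fin.revPerm) * finRotate (m + 1) := by
      ext i
      induction i using Fin.lastCases with
      | last => simp
      | cast j => simp [Fin.rev_castSucc]
    rw [hdecomp, map_mul, Equiv.Perm.decomposeFin.symm_sign, sign_finRotate, ih,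
      Nat.choose_succ_succ', Nat.choose_one_right]
    simp [pow_add, mul_comm]

theorem Fin.sign_revPerm_two_mul_add_one (k : ℕ) :
    Equiv.Perm.sign (Fin.revPerm : Equiv.Perm (Fin (2 * k + 1))) = (-1) ^ k := by
  have hchoose : (2 * k + 1).choose 2 = k + 2 * (k * k) := by
    rw [Nat.choose_two_right, Nat.add_sub_cancel]
    exact Nat.div_eq_of_eq_mul_left two_pos (by ring)
  rw [Fin.sign_revPerm, hchoose, pow_add, pow_mul]
  simp

namespace Matrix

variable {R : Type*} [CommRing R]

theorem det_toBlocks₁₁_eq_det_mul_det_toBlocks₂₂ {m n : Type*} [Fintype m] [Fintype n]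
    [DecidableEq m] [DecidableEq n] {A B : Matrix (m ⊕ n) (m ⊕ n) R}
    (h : A * B = 1) : A.toBlocks₁₁.det = A.det * B.toBlocks₂₂.det := by
  rw [← fromBlocks_toBlocks A, ← fromBlocks_toBlocks B, fromBlocks_multiply, ← fromBlocks_one,
    fromBlocks_inj] at h
  obtain ⟨-, h₁₂, -, h₂₂⟩ := h
  have hprod : A * fromBlocks 1 B.toBlocks₁₂ 0 B.toBlocks₂₂
      = fromBlocks A.toBlocks₁₁ 0 A.toBlocks₂₁ 1 := by
    conv_lhs => rw [← fromBlocks_toBlocks A]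
    rw [fromBlocks_multiply, h₁₂, h₂₂]
    simp
  simpa [det_fromBlocks_zero₂₁, det_fromBlocks_zero₁₂] using (congrArg det hprod).symm

noncomputable def upperToeplitz (n : ℕ) (f : R⟦X⟧) : Matrix (Fin n) (Fin n) R :=
  of fun i j => if i ≤ j then coeff ((j : ℕ) - i) f else 0

section upperToeplitz

variable (n : ℕ)

theorem upperToeplitz_mul (f g : R⟦X⟧) :
    upperToeplitz n f * upperToeplitz n g = upperToeplitz n (f * g) := by
  ext i j
  simp only [upperToeplitz, mul_apply, of_apply, mul_ite, ite_mul, mul_zero, zero_mul,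
    ← ite_and, ← sum_filter]
  split_ifs with hij
  · have hfilter : ({l | l ≤ j ∧ i ≤ l} : Finset (Fin n)) = Icc i j := by ext; simp [and_comm]
    have hval := sum_map (Icc i j) Fin.valEmbedding fun l => coeff (l - i) f * coeff (j - l) g
    simp only [Fin.map_valEmbedding_Icc, Fin.valEmbedding_apply] at hval
    rw [hfilter, ← hval, ← Ico_add_one_right_eq_Icc, sum_Ico_eq_sum_range, coeff_mul,
      Nat.sum_antidiagonal_eq_sum_range_succ fun p q => coeff p f * coeff q g]
    refine sum_congr (by congr 1; omega) fun p _ => ?_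
    rw [Nat.add_sub_cancel_left, Nat.sub_add_eq]
  · refine sum_eq_zero fun l hl => ?_
    simp only [mem_filter] at hl
    exact absurd (hl.2.2.trans hl.2.1) hij

theorem upperToeplitz_one : upperToeplitz n (1 : R⟦X⟧) = 1 := by
  ext i j
  simp only [upperToeplitz, of_apply, coeff_one, one_apply, Fin.ext_iff, Fin.le_def]
  split_ifs <;> first | rfl | omega

theorem det_upperToeplitz (f : R⟦X⟧) : (upperToeplitz n f).det = constantCoeff f ^ n := by
  rw [det_of_isUpperTriangular]
  · simp [upperToeplitz]
  · intro i j hij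
    simp [upperToeplitz, (show ¬ i ≤ j from not_le.mpr hij)]

end upperToeplitz

noncomputable def hankel (n s : ℕ) (f : R⟦X⟧) : Matrix (Fin n) (Fin n) R :=
  of fun i j => coeff ((i : ℕ) + j + s) f

theorem det_hankel_rescale (a : R) (n s : ℕ) (f : R⟦X⟧) :
    (hankel n s (rescale a f)).det = a ^ (n * (n - 1) + n * s) * (hankel n s f).det := by
  have hscale : hankel n s (rescale a f)
      = of fun i j : Fin n =>
          a ^ (i : ℕ) * of (fun i j : Fin n => a ^ ((j : ℕ) + s) * hankel n s f i j) i j := by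
    ext i j
    simp only [hankel, coeff_rescale, of_apply]
    ring
  have hsum : ∑ i : Fin n, (i : ℕ) * 2 = n * (n - 1) := by
    rw [← sum_mul, Fin.sum_univ_eq_sum_range (fun i => i), sum_range_id_mul_two]
  rw [hscale, det_mul_column, det_mul_row, ← mul_assoc, prod_pow_eq_pow_sum,
    prod_pow_eq_pow_sum, ← pow_add, sum_add_distrib, ← hsum]
  simp [mul_two, sum_add_distrib, add_assoc]

theorem det_hankel_eq_of_mul_eq_one {f g : R⟦X⟧} (hfg : f * g = 1) (k : ℕ) :
    (hankel (k + 1) 0 f).det = (-1) ^ k * constantCoeff f ^ (2 * k + 1) * (hankel k 2 g).det := by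
  -- `e (inl i) = k + i` and `e (inr j) = j`
  let e : Fin (k + 1) ⊕ Fin k ≃ Fin (2 * k + 1) :=
    (Equiv.sumComm _ _).trans (finSumFinEquiv.trans (finCongr (by omega)))
  let A := ((upperToeplitz (2 * k + 1) f).submatrix Fin.revPerm id).submatrix e e
  let B := ((upperToeplitz (2 * k + 1) g).submatrix id Fin.revPerm).submatrix e e
  have hAB : A * B = 1 := by
    simp only [A, B, submatrix_submatrix, Function.id_comp]
    rw [submatrix_mul_equiv, upperToeplitz_mul, hfg, upperToeplitz_one]
    exact submatrix_one_equiv (e.trans Fin.revPerm)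
  have hA : A.det = (-1) ^ k * constantCoeff f ^ (2 * k + 1) := by
    rw [det_submatrix_equiv_self, det_permute, det_upperToeplitz,
      Fin.sign_revPerm_two_mul_add_one]
    simp
  have hA₁₁ : A.toBlocks₁₁ = hankel (k + 1) 0 f := by
    ext i j
    simp only [A, e, toBlocks₁₁, hankel, upperToeplitz, submatrix_apply, of_apply, id_eq,
      Equiv.trans_apply, Equiv.sumComm_apply, Sum.swap_inl, finSumFinEquiv_apply_right,
      finCongr_apply, Fin.revPerm_apply, Fin.le_def, Fin.val_rev, Fin.val_cast, Fin.val_natAdd]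
    rw [if_pos (by omega)]
    congr 2
    omega
  have hB₂₂ : B.toBlocks₂₂.submatrix Fin.revPerm Fin.revPerm = hankel k 2 g := by
    ext i j
    simp only [B, e, toBlocks₂₂, hankel, upperToeplitz, submatrix_apply, of_apply, id_eq,
      Equiv.trans_apply, Equiv.sumComm_apply, Sum.swap_inr, finSumFinEquiv_apply_left,
      finCongr_apply, Fin.revPerm_apply, Fin.le_def, Fin.val_rev, Fin.val_cast, Fin.val_castAdd]
    rw [if_pos (by omega)]
    congr 2
    omega
  rw [← hA₁₁, ← hB₂₂, det_submatrix_equiv_self, det_toBlocks₁₁_eq_det_mul_det_toBlocks₂₂ hAB, hA]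

end Matrix

section taylorSeries

variable {𝕜 : Type*} [NontriviallyNormedField 𝕜]

noncomputable def taylorSeries (f : 𝕜 → 𝕜) (x : 𝕜) : 𝕜⟦X⟧ :=
  PowerSeries.mk fun k => iteratedDeriv k f x / k !

theorem constantCoeff_taylorSeries (f : 𝕜 → 𝕜) (x : 𝕜) :
    constantCoeff (taylorSeries f x) = f x := by
  simp [taylorSeries, ← coeff_zero_eq_constantCoeff_apply]

theorem taylorSeries_const (c x : 𝕜) : taylorSeries (fun _ => c) x = C c := by
  ext k
  simp only [taylorSeries, iteratedDeriv_const, coeff_mk, coeff_C]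
  split_ifs with hk <;> simp [hk]

theorem taylorSeries_comp_neg (f : 𝕜 → 𝕜) (x : 𝕜) :
    taylorSeries (fun t => f (-t)) x = rescale (-1) (taylorSeries f (-x)) := by
  ext k
  simp [taylorSeries, iteratedDeriv_comp_neg, coeff_rescale, mul_div_assoc]

theorem taylorSeries_mul [CharZero 𝕜] {f g : 𝕜 → 𝕜} {x : 𝕜} (hf : ContDiffAt 𝕜 ∞ f x)
    (hg : ContDiffAt 𝕜 ∞ g x) :
    taylorSeries (f * g) x = taylorSeries f x * taylorSeries g x := by
  ext s
  rw [coeff_mul, Nat.sum_antidiagonal_eq_sum_range_succ fun i j =>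
      coeff i (taylorSeries f x) * coeff j (taylorSeries g x)]
  simp only [taylorSeries, coeff_mk]
  rw [iteratedDeriv_mul (hf.of_le (by exact_mod_cast le_top))
    (hg.of_le (by exact_mod_cast le_top)), sum_div]
  refine sum_congr rfl fun i hi => ?_
  have hle : i ≤ s := Nat.le_of_lt_succ (mem_range.mp hi)
  have hchoose : (s.choose i : 𝕜) ≠ 0 := by exact_mod_cast (Nat.choose_pos hle).ne'
  rw [← Nat.choose_mul_factorial_mul_factorial hle, Nat.cast_mul, Nat.cast_mul]
  field_simp

theorem taylorSeries_mul_rescale_neg_one_eq_one [CharZero 𝕜] {f : 𝕜 → 𝕜} (hf : ContDiff 𝕜 ∞ f)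
    (hf_neg : ∀ t, f t * f (-t) = 1) :
    taylorSeries f 0 * rescale (-1) (taylorSeries f 0) = 1 := by
  have hf_comp_neg : ContDiff 𝕜 ∞ fun t => f (-t) := hf.comp contDiff_neg
  have hprod : f * (fun t => f (-t)) = fun _ => 1 := funext hf_neg
  rw [← neg_zero, ← taylorSeries_comp_neg, neg_zero,
    ← taylorSeries_mul hf.contDiffAt hf_comp_neg.contDiffAt, hprod, taylorSeries_const, map_one]

end taylorSeries

noncomputable def muSeries (x : ℂ) : ℂ⟦X⟧ :=
  taylorSeries (fun t => exp (-t ^ 3 / 3 + t * x)) 0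

theorem hankel_muSeries (m s : ℕ) (x : ℂ) :
    Matrix.hankel m s (muSeries x) = Matrix.of fun ℓ j : Fin m => mu ((ℓ : ℕ) + j + s) x := by
  ext
  simp [Matrix.hankel, muSeries, taylorSeries, mu]

theorem constantCoeff_muSeries (x : ℂ) : constantCoeff (muSeries x) = 1 := by
  simp [muSeries, constantCoeff_taylorSeries]

theorem muSeries_mul_rescale_neg_one (x : ℂ) : muSeries x * rescale (-1) (muSeries x) = 1 :=
  taylorSeries_mul_rescale_neg_one_eq_one (by fun_prop) fun t => by
    rw [← exp_add, ← exp_zero]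
    ring_nf

theorem hankel_shift_identity_general (n : ℕ) (x : ℂ) :
    (-1 : ℂ) ^ (n - 1) *
        Matrix.det (Matrix.of fun ℓ j : Fin (n - 1) => mu ((ℓ : ℕ) + (j : ℕ) + 2) x) =
      Matrix.det (Matrix.of fun ℓ j : Fin n => mu ((ℓ : ℕ) + (j : ℕ)) x) := by
  cases n with
  | zero => simp
  | succ k =>
    have h := Matrix.det_hankel_eq_of_mul_eq_one (muSeries_mul_rescale_neg_one x) k
    rw [Matrix.det_hankel_rescale, constantCoeff_muSeries, hankel_muSeries, hankel_muSeries,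
      ((Nat.even_mul_pred_self k).add (even_two.mul_left k)).neg_one_pow] at h
    simpa using h.symm

/-- Hankel determinant shift identity:
`(-1)^{n-1} det[μ_{ℓ+j}]_{ℓ,j=1}^{n-1} = det[μ_{ℓ+j-2}]_{ℓ,j=1}^{n}`. -/
theorem hankel_shift_identity (n : ℕ) (hn : 2 ≤ n) (x : ℂ) :
    (-1 : ℂ) ^ (n - 1) *
        Matrix.det (Matrix.of fun ℓ j : Fin (n - 1) => mu ((ℓ : ℕ) + (j : ℕ) + 2) x) =
      Matrix.det (Matrix.of fun ℓ j : Fin n => mu ((ℓ : ℕ) + (j : ℕ)) x) :=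
  hankel_shift_identity_general n x
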